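/- Let X ⊆ ℝ^n be Clarke regular and prox-regular with respect to a locally Lipschitz metric g, and let f : X → ℝ^n be a locally Lipschitz vector field. Then the projected vector field Π^g_X f is single-valued, and for every x ∈ X there exists L > 0 such that for all y ∈ X in a neighborhood of x, ⟨Π^g_X f(y) − Π^g_X f(x), y − x⟩_{g(x)} ≤ L ‖y − x‖²_{g(x)}. -/

import Mathlib

open MeasureTheory Filter Topology Set
open scoped RealInnerProductSpace

/-- Euclidean space ℝ^n. -/
abbrev Euc (n : ℕ) := EuclideanSpace ℝ (Fin n)

variable {n : ℕ}

/-- The tangent (contingent) cone of `X` at `x`. -/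
def tanCone (X : Set (Euc n)) (x : Euc n) : Set (Euc n) :=
  {v | ∃ (xk : ℕ → Euc n) (δ : ℕ → ℝ),
    (∀ k, xk k ∈ X) ∧ Tendsto xk atTop (𝓝 x) ∧
    (∀ k, 0 < δ k) ∧ Tendsto δ atTop (𝓝 0) ∧
    Tendsto (fun k => (δ k)⁻¹ • (xk k - x)) atTop (𝓝 v)}

/-- The Clarke tangent cone of `X` at `x` (inner limit of tangent cones). -/
def clarkeCone (X : Set (Euc n)) (x : Euc n) : Set (Euc n) :=
  {v | ∀ yk : ℕ → Euc n, (∀ k, yk k ∈ X) → Tendsto yk atTop (𝓝 x) →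
    ∃ vk : ℕ → Euc n, (∀ k, vk k ∈ tanCone X (yk k)) ∧ Tendsto vk atTop (𝓝 v)}

/-- A set is locally compact if it is the intersection of a closed and an open set. -/
def LocCompactSet (X : Set (Euc n)) : Prop :=
  ∃ C U : Set (Euc n), IsClosed C ∧ IsOpen U ∧ X = C ∩ U

/-- `X` is Clarke regular: locally compact and tangent cone equals Clarke tangent cone. -/
def ClarkeRegular (X : Set (Euc n)) : Prop :=
  LocCompactSet X ∧ ∀ x ∈ X, tanCone X x = clarkeCone X x

/-- A (Riemannian) metric: an inner product `B x` on ℝ^n for every point `x`. -/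
structure VarMetric (n : ℕ) where
  B : Euc n → Euc n →L[ℝ] Euc n →L[ℝ] ℝ
  symm : ∀ x v w, B x v w = B x w v
  posdef : ∀ x v, v ≠ 0 → 0 < B x v v

namespace VarMetric

/-- The norm induced by the metric at `x`. -/
noncomputable def gnorm (g : VarMetric n) (x v : Euc n) : ℝ := Real.sqrt (g.B x v v)

/-- Maximum eigenvalue (max of the `g`-norm over the Euclidean unit sphere). -/
noncomputable def maxEig (g : VarMetric n) (x : Euc n) : ℝ :=
  sSup {r | ∃ v : Euc n, ‖v‖ = 1 ∧ r = g.gnorm x v}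

/-- Minimum eigenvalue (min of the `g`-norm over the Euclidean unit sphere). -/
noncomputable def minEig (g : VarMetric n) (x : Euc n) : ℝ :=
  sInf {r | ∃ v : Euc n, ‖v‖ = 1 ∧ r = g.gnorm x v}

/-- Condition number of the metric at `x`. -/
noncomputable def cond (g : VarMetric n) (x : Euc n) : ℝ := g.maxEig x / g.minEig x

end VarMetric

/-- The projected vector field: `g`-closest points to `f x` in the tangent cone. -/
noncomputable def projVF (X : Set (Euc n)) (g : VarMetric n) (f : Euc n → Euc n)
    (x : Euc n) : Set (Euc n) :=
  {v | v ∈ tanCone X x ∧ ∀ w ∈ tanCone X x, g.gnorm x (v - f x) ≤ g.gnorm x (w - f x)}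

/-- Krasovskii regularization of a set-valued map `F` on `X`. -/
def kras (X : Set (Euc n)) (F : Euc n → Set (Euc n)) (x : Euc n) : Set (Euc n) :=
  closure (convexHull ℝ {v | ∃ (xk : ℕ → Euc n) (vk : ℕ → Euc n),
    (∀ k, xk k ∈ X) ∧ Tendsto xk atTop (𝓝 x) ∧
    (∀ k, vk k ∈ F (xk k)) ∧ Tendsto vk atTop (𝓝 v)})

/-- Carathéodory solution of `ẋ ∈ F(x)`, `x 0 = x₀`, on the interval `I`
(`I = Set.Ico 0 T`, or `Set.Ici 0` for complete solutions). -/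
def IsSolOn (X : Set (Euc n)) (F : Euc n → Set (Euc n)) (x₀ : Euc n)
    (x : ℝ → Euc n) (I : Set ℝ) : Prop :=
  x 0 = x₀ ∧ (∀ t ∈ I, x t ∈ X) ∧
  ∃ v : ℝ → Euc n, LocallyIntegrableOn v I volume ∧
    (∀ t ∈ I, x t = x₀ + ∫ s in (0:ℝ)..t, v s) ∧
    (∀ᵐ t ∂(volume.restrict I), v t ∈ F (x t))

/-- The normal cone of `X` at `x` with respect to the metric `g` (polar of the Clarke cone). -/
def normalCone (X : Set (Euc n)) (g : VarMetric n) (x : Euc n) : Set (Euc n) :=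
  {η | ∀ v ∈ clarkeCone X x, g.B x v η ≤ 0}

/-- `X` is prox-regular at `x` with respect to the metric `g`. -/
def ProxRegAt {n : ℕ} (X : Set (Euc n)) (g : VarMetric n) (x : Euc n) : Prop :=
  ∃ L > (0:ℝ), ∃ W ∈ 𝓝 x, ∀ y ∈ X ∩ W, ∀ z ∈ X ∩ W, ∀ η ∈ normalCone X g y,
    g.B y η (z - y) ≤ L * g.gnorm y η * (g.gnorm y (z - y)) ^ 2

/-- `X` is prox-regular with respect to the metric `g`. -/
def ProxReg {n : ℕ} (X : Set (Euc n)) (g : VarMetric n) : Prop :=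
  ∀ x ∈ X, ProxRegAt X g x

/-- The metric `g` is locally Lipschitz on `X`. -/
def LocLipMetric {n : ℕ} (X : Set (Euc n)) (g : VarMetric n) : Prop :=
  ∀ x ∈ X, ∃ K : NNReal, ∃ U ∈ 𝓝 x, LipschitzOnWith K g.B (X ∩ U)


/-! ### Auxiliary lemmas -/

lemma aux_tendsto_one_div_nat : Tendsto (fun m : ℕ => 1/((m:ℝ)+1)) atTop (𝓝 0) :=
  tendsto_one_div_add_atTop_nhds_zero_nat

lemma zero_mem_tanCone {X : Set (Euc n)} {x : Euc n} (hx : x ∈ X) :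
    (0 : Euc n) ∈ tanCone X x := by
  refine ⟨fun _ => x, fun k => 1/(k+1), fun _ => hx, tendsto_const_nhds, ?_, ?_, ?_⟩
  · intro k; positivity
  · exact tendsto_one_div_add_atTop_nhds_zero_nat
  · simpa using (tendsto_const_nhds : Tendsto (fun _ : ℕ => (0:Euc n)) atTop (𝓝 0))

lemma smul_mem_tanCone {X : Set (Euc n)} {x : Euc n} {c : ℝ} (hc : 0 < c)
    {v : Euc n} (hv : v ∈ tanCone X x) : c • v ∈ tanCone X x := by
  obtain ⟨xk, δ, hmem, hxk, hδpos, hδ0, hlim⟩ := hv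
  refine ⟨xk, fun k => δ k / c, hmem, hxk, fun k => div_pos (hδpos k) hc, ?_, ?_⟩
  · simpa using hδ0.div_const c
  · have : Tendsto (fun k => c • ((δ k)⁻¹ • (xk k - x))) atTop (𝓝 (c • v)) :=
      hlim.const_smul c
    convert this using 2 with k
    rw [smul_smul]
    congr 1
    field_simp
lemma isClosed_tanCone (X : Set (Euc n)) (x : Euc n) : IsClosed (tanCone X x) := by
  refine IsSeqClosed.isClosed ?_
  intro u v hu huv
  have key : ∀ m : ℕ, ∃ p : Euc n, p ∈ X ∧ ∃ μ : ℝ, 0 < μ ∧ μ < 1/((m:ℝ)+1) ∧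
      ‖p - x‖ < 1/((m:ℝ)+1) ∧ ‖μ⁻¹ • (p - x) - u m‖ < 1/((m:ℝ)+1) := by
    intro m
    obtain ⟨xk, δ, hmem, hxk, hδpos, hδ0, hlim⟩ := hu m
    have hpos : (0:ℝ) < 1/((m:ℝ)+1) := by positivity
    have e1 : ∀ᶠ k in atTop, ‖xk k - x‖ < 1/((m:ℝ)+1) := by
      have := (tendsto_iff_norm_sub_tendsto_zero.mp hxk)
      exact (this.eventually (eventually_lt_nhds hpos))
    have e2 : ∀ᶠ k in atTop, δ k < 1/((m:ℝ)+1) := hδ0.eventually (eventually_lt_nhds hpos)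
    have e3 : ∀ᶠ k in atTop, ‖(δ k)⁻¹ • (xk k - x) - u m‖ < 1/((m:ℝ)+1) := by
      have := tendsto_iff_norm_sub_tendsto_zero.mp hlim
      exact (this.eventually (eventually_lt_nhds hpos))
    obtain ⟨k, ⟨h1, h2⟩, h3⟩ := ((e1.and e2).and e3).exists
    exact ⟨xk k, hmem k, δ k, hδpos k, h2, h1, h3⟩
  choose p hpX μ hμpos hμlt hplt hmain using key
  refine ⟨p, μ, hpX, ?_, hμpos, ?_, ?_⟩
  · rw [tendsto_iff_norm_sub_tendsto_zero]
    exact squeeze_zero (fun m => norm_nonneg _) (fun m => (hplt m).le) aux_tendsto_one_div_nat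
  · exact squeeze_zero (fun m => (hμpos m).le) (fun m => (hμlt m).le) aux_tendsto_one_div_nat
  · rw [tendsto_iff_norm_sub_tendsto_zero]
    have hb : ∀ m : ℕ, ‖(μ m)⁻¹ • (p m - x) - v‖ ≤ 1/((m:ℝ)+1) + ‖u m - v‖ := by
      intro m
      calc ‖(μ m)⁻¹ • (p m - x) - v‖
             ≤ ‖(μ m)⁻¹ • (p m - x) - u m‖ + ‖u m - v‖ :=
            norm_sub_le_norm_sub_add_norm_sub _ _ _
        _ ≤ 1/((m:ℝ)+1) + ‖u m - v‖ := by
            have := (hmain m).le; linarith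
    have hlim2 : Tendsto (fun m : ℕ => 1/((m:ℝ)+1) + ‖u m - v‖) atTop (𝓝 0) := by
      have := tendsto_iff_norm_sub_tendsto_zero.mp huv
      simpa using aux_tendsto_one_div_nat.add this
    exact squeeze_zero (fun m => norm_nonneg _) hb hlim2

lemma clarke_uniform {X : Set (Euc n)} (hloc : LocCompactSet X) {x : Euc n} (hx : x ∈ X)
    {v : Euc n} (hv : v ∈ clarkeCone X x) {ε : ℝ} (hε : 0 < ε) :
    ∃ δ > (0:ℝ), ∀ y ∈ X, ‖y - x‖ < δ → ∀ t : ℝ, 0 < t → t < δ →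
      ∃ z ∈ X, ‖z - (y + t • v)‖ ≤ ε * t := by
  by_contra hcon
  push_neg at hcon
  have hcon' : ∀ k : ℕ, ∃ y ∈ X, ‖y - x‖ < 1/((k:ℝ)+1) ∧ ∃ t : ℝ, 0 < t ∧ t < 1/((k:ℝ)+1) ∧
      ∀ z ∈ X, ε * t < ‖z - (y + t • v)‖ := by
    intro k
    have := hcon (1/((k:ℝ)+1)) (by positivity)
    obtain ⟨y, hyX, hyx, t, ht0, htlt, hfar⟩ := this
    exact ⟨y, hyX, hyx, t, ht0, htlt, hfar⟩
  choose y hyX hyx t ht0 htlt hfar using hcon'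
  -- local compactness: a compact neighborhood piece of X
  obtain ⟨C, U, hC, hU, hXeq⟩ := hloc
  have hxU : x ∈ U := (hXeq ▸ hx).2
  obtain ⟨r, hr0, hrU⟩ := Metric.nhds_basis_closedBall.mem_iff.mp (hU.mem_nhds hxU)
  set X' : Set (Euc n) := X ∩ Metric.closedBall x r with hX'def
  have hX'eq : X' = C ∩ Metric.closedBall x r := by
    rw [hX'def, hXeq]
    ext p
    constructor
    · rintro ⟨⟨h1, _⟩, h3⟩; exact ⟨h1, h3⟩
    · rintro ⟨h1, h3⟩; exact ⟨⟨h1, hrU h3⟩, h3⟩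
  have hX'comp : IsCompact X' := by
    rw [hX'eq]
    exact (isCompact_closedBall x r).inter_left hC
  have hX'ne : X'.Nonempty := ⟨x, hx, Metric.mem_closedBall_self hr0.le⟩
  have hX'sub : X' ⊆ X := inter_subset_left
  set A : ℝ := ε/2 + 1 + ‖v‖ with hAdef
  have hA0 : 0 < A := by positivity
  have key : ∀ k : ℕ, ∃ z, z ∈ X ∧ ‖z - x‖ ≤ A * (1/((k:ℝ)+1)) ∧
      (1/((k:ℝ)+1) ≤ r →
        ∃ τ : ℝ, 0 ≤ τ ∧ τ < t k ∧ dist z (y k + τ • v) ≤ (ε/2)*τ ∧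
          ∀ τ' ∈ Set.Icc (0:ℝ) (t k),
            Metric.infDist (y k + τ' • v) X' ≤ (ε/2)*τ' → τ' ≤ τ) := by
    intro k
    by_cases hk : 1/((k:ℝ)+1) ≤ r
    · -- the real construction
      have hykX' : y k ∈ X' := ⟨hyX k, by
        rw [Metric.mem_closedBall, dist_eq_norm]; exact le_trans (hyx k).le hk⟩
      set S : Set ℝ := Set.Icc 0 (t k) ∩
        {τ | Metric.infDist (y k + τ • v) X' ≤ (ε/2)*τ} with hSdef
      have hScomp : IsCompact S := by
        apply (isCompact_Icc).inter_right
        apply isClosed_le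
        · exact (Metric.continuous_infDist_pt X').comp
            (continuous_const.add (continuous_id.smul continuous_const))
        · exact continuous_const.mul continuous_id
      have h0S : (0:ℝ) ∈ S := by
        constructor
        · exact ⟨le_refl 0, (ht0 k).le⟩
        · show Metric.infDist (y k + (0:ℝ) • v) X' ≤ (ε/2)*0
          rw [zero_smul, add_zero, mul_zero]
          exact le_of_eq (Metric.infDist_zero_of_mem hykX')
      have hSne : S.Nonempty := ⟨0, h0S⟩
      set τ : ℝ := sSup S with hτdef
      have hτS : τ ∈ S := hScomp.sSup_mem hSne
      have hτmax : ∀ τ' ∈ S, τ' ≤ τ := fun τ' h => le_csSup hScomp.bddAbove h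
      have htknS : t k ∉ S := by
        intro htk
        obtain ⟨z', hz'X', hz'd⟩ := hX'comp.exists_infDist_eq_dist hX'ne (y k + t k • v)
        have h1 : Metric.infDist (y k + t k • v) X' ≤ ε/2 * t k := htk.2
        rw [hz'd] at h1
        have h2 := hfar k z' (hX'sub hz'X')
        rw [dist_comm, dist_eq_norm] at h1
        have : ε * t k < (ε/2) * t k := lt_of_lt_of_le h2 h1
        nlinarith [ht0 k]
      have hτlt : τ < t k := lt_of_le_of_ne hτS.1.2 (fun h => htknS (h ▸ hτS))
      obtain ⟨z, hzX', hzd⟩ := hX'comp.exists_infDist_eq_dist hX'ne (y k + τ • v)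
      have hzdist : dist z (y k + τ • v) ≤ (ε/2)*τ := by
        rw [dist_comm, ← hzd]; exact hτS.2
      refine ⟨z, hX'sub hzX', ?_, fun _ => ⟨τ, hτS.1.1, hτlt, hzdist, fun τ' hτ'I hτ'd =>
        hτmax τ' ⟨hτ'I, hτ'd⟩⟩⟩
      have hτle : τ ≤ 1/((k:ℝ)+1) := le_trans hτlt.le (htlt k).le
      have hτ0 : 0 ≤ τ := hτS.1.1
      calc ‖z - x‖ ≤ ‖z - (y k + τ • v)‖ + ‖y k + τ • v - x‖ := by
            have := norm_sub_le_norm_sub_add_norm_sub z (y k + τ • v) x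
            exact this
        _ ≤ (ε/2)*τ + (‖y k - x‖ + τ*‖v‖) := by
            rw [dist_eq_norm] at hzdist
            have h2 : ‖y k + τ • v - x‖ ≤ ‖y k - x‖ + τ*‖v‖ := by
              have : y k + τ • v - x = (y k - x) + τ • v := by abel
              rw [this]
              refine le_trans (norm_add_le _ _) ?_
              rw [norm_smul, Real.norm_eq_abs, abs_of_nonneg hτ0]
            linarith
        _ ≤ A * (1/((k:ℝ)+1)) := by
            have h3 : ‖y k - x‖ ≤ 1/((k:ℝ)+1) := (hyx k).le
            have h5 : (0:ℝ) < 1/((k:ℝ)+1) := by positivity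
            have h4 : τ*‖v‖ ≤ (1/((k:ℝ)+1))*‖v‖ :=
              mul_le_mul_of_nonneg_right hτle (norm_nonneg v)
            have h6 : (ε/2)*τ ≤ (ε/2)*(1/((k:ℝ)+1)) := by
              apply mul_le_mul_of_nonneg_left hτle; linarith
            rw [hAdef]; ring_nf; ring_nf at h3 h4 h6; nlinarith [norm_nonneg (y k - x)]
    · exact ⟨x, hx, by simpa using (by positivity : (0:ℝ) ≤ A * (1/((k:ℝ)+1))),
        fun h => absurd h hk⟩
  choose z hzX hzb hzmain using key
  have hztend : Tendsto z atTop (𝓝 x) := by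
    rw [tendsto_iff_norm_sub_tendsto_zero]
    refine squeeze_zero (fun k => norm_nonneg _) hzb ?_
    simpa using aux_tendsto_one_div_nat.const_mul A
  obtain ⟨w, hwmem, hwv⟩ := hv z hzX hztend
  -- choose a suitable index k
  have e1 : ∀ᶠ k : ℕ in atTop, 1/((k:ℝ)+1) ≤ r := by
    refine (aux_tendsto_one_div_nat.eventually (eventually_le_nhds hr0))
  have e2 : ∀ᶠ k in atTop, ‖w k - v‖ < ε/6 := by
    have := tendsto_iff_norm_sub_tendsto_zero.mp hwv
    exact this.eventually (eventually_lt_nhds (by positivity))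
  have e3 : ∀ᶠ k in atTop, ‖z k - x‖ < r := by
    have := tendsto_iff_norm_sub_tendsto_zero.mp hztend
    exact this.eventually (eventually_lt_nhds hr0)
  obtain ⟨k, ⟨hk1, hk2⟩, hk3⟩ := ((e1.and e2).and e3).exists
  obtain ⟨τ, hτ0, hτlt, hzd, hτmax⟩ := hzmain k hk1
  -- unpack tangent cone membership of w k at z k
  obtain ⟨p, μ, hpX, hptend, hμ0, hμtend, hplim⟩ := hwmem k
  have f1 : ∀ᶠ j in atTop, ‖(μ j)⁻¹ • (p j - z k) - w k‖ < ε/6 := by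
    have := tendsto_iff_norm_sub_tendsto_zero.mp hplim
    exact this.eventually (eventually_lt_nhds (by positivity))
  have f2 : ∀ᶠ j in atTop, μ j < t k - τ := hμtend.eventually (eventually_lt_nhds (by linarith))
  have f3 : ∀ᶠ j in atTop, ‖p j - z k‖ < r - ‖z k - x‖ := by
    have := tendsto_iff_norm_sub_tendsto_zero.mp hptend
    exact this.eventually (eventually_lt_nhds (by linarith))
  obtain ⟨j, ⟨hj1, hj2⟩, hj3⟩ := ((f1.and f2).and f3).exists
  have hpX' : p j ∈ X' := by
    refine ⟨hpX j, ?_⟩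
    rw [Metric.mem_closedBall, dist_eq_norm]
    calc ‖p j - x‖ ≤ ‖p j - z k‖ + ‖z k - x‖ := norm_sub_le_norm_sub_add_norm_sub _ _ _
      _ ≤ r := by linarith
  set τ' : ℝ := τ + μ j with hτ'def
  have hτ'I : τ' ∈ Set.Icc (0:ℝ) (t k) := ⟨by simp only [hτ'def]; linarith [hμ0 j], by simp only [hτ'def]; linarith [hμ0 j]⟩
  have hest : Metric.infDist (y k + τ' • v) X' ≤ (ε/2)*τ' := by
    refine le_trans (Metric.infDist_le_dist_of_mem hpX') ?_
    have hid : y k + τ' • v - p j =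
        (y k + τ • v - z k) - (p j - z k - (μ j) • w k) - (μ j) • (w k - v) := by
      rw [hτ'def, add_smul]
      module
    have hn1 : ‖p j - z k - (μ j) • w k‖ ≤ (ε/6) * μ j := by
      have : p j - z k - (μ j) • w k = (μ j) • ((μ j)⁻¹ • (p j - z k) - w k) := by
        rw [smul_sub, smul_smul, mul_inv_cancel₀ (hμ0 j).ne', one_smul]
      rw [this, norm_smul, Real.norm_eq_abs, abs_of_pos (hμ0 j)]
      calc μ j * ‖(μ j)⁻¹ • (p j - z k) - w k‖ ≤ μ j * (ε/6) :=
            mul_le_mul_of_nonneg_left hj1.le (hμ0 j).le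
        _ = (ε/6) * μ j := by ring
    have hn2 : ‖(μ j) • (w k - v)‖ ≤ (ε/6) * μ j := by
      rw [norm_smul, Real.norm_eq_abs, abs_of_pos (hμ0 j)]
      calc μ j * ‖w k - v‖ ≤ μ j * (ε/6) := mul_le_mul_of_nonneg_left hk2.le (hμ0 j).le
        _ = (ε/6) * μ j := by ring
    rw [dist_eq_norm, hid]
    calc ‖(y k + τ • v - z k) - (p j - z k - (μ j) • w k) - (μ j) • (w k - v)‖
        ≤ ‖y k + τ • v - z k‖ + ‖p j - z k - (μ j) • w k‖ + ‖(μ j) • (w k - v)‖ := by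
          refine le_trans (norm_sub_le _ _) ?_
          have := norm_sub_le (y k + τ • v - z k) (p j - z k - (μ j) • w k)
          linarith
      _ ≤ (ε/2)*τ + (ε/6)*μ j + (ε/6)*μ j := by
          rw [dist_eq_norm, norm_sub_rev] at hzd
          linarith
      _ ≤ (ε/2)*τ' := by rw [hτ'def]; nlinarith [hμ0 j]
  have := hτmax τ' hτ'I hest
  rw [hτ'def] at this
  linarith [hμ0 j]

lemma add_mem_tanCone {X : Set (Euc n)} (hloc : LocCompactSet X) {x : Euc n} (hx : x ∈ X)
    {v w : Euc n} (hv : v ∈ clarkeCone X x) (hw : w ∈ tanCone X x) :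
    v + w ∈ tanCone X x := by
  obtain ⟨xk, δ, hmem, hxk, hδpos, hδ0, hlim⟩ := hw
  have hXne : X.Nonempty := ⟨x, hx⟩
  set q : ℕ → Euc n := fun k => xk k + δ k • v with hqdef
  set g : ℕ → ℝ := fun k => Metric.infDist (q k) X with hgdef
  have hg0 : ∀ k, 0 ≤ g k := fun k => Metric.infDist_nonneg
  have hgd : Tendsto (fun k => g k / δ k) atTop (𝓝 0) := by
    rw [Metric.tendsto_atTop]
    intro ε hε
    obtain ⟨δ₀, hδ₀0, hδ₀⟩ := clarke_uniform hloc hx hv (half_pos hε)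
    have e1 : ∀ᶠ k : ℕ in atTop, ‖xk k - x‖ < δ₀ :=
      (tendsto_iff_norm_sub_tendsto_zero.mp hxk).eventually (eventually_lt_nhds hδ₀0)
    have e2 : ∀ᶠ k : ℕ in atTop, δ k < δ₀ := hδ0.eventually (eventually_lt_nhds hδ₀0)
    obtain ⟨N, hN⟩ := (e1.and e2).exists_forall_of_atTop
    refine ⟨N, fun k hk => ?_⟩
    obtain ⟨h1, h2⟩ := hN k hk
    obtain ⟨z, hzX, hz⟩ := hδ₀ (xk k) (hmem k) h1 (δ k) (hδpos k) h2
    have hgle : g k ≤ (ε/2) * δ k := by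
      refine le_trans (Metric.infDist_le_dist_of_mem hzX) ?_
      rw [dist_comm, dist_eq_norm]
      exact hz
    rw [Real.dist_eq, sub_zero, abs_of_nonneg (div_nonneg (hg0 k) (hδpos k).le)]
    rw [div_lt_iff₀ (hδpos k)]
    calc g k ≤ (ε/2) * δ k := hgle
      _ < ε * δ k := by nlinarith [hδpos k]
  have key : ∀ k : ℕ, ∃ z ∈ X, dist (q k) z < g k + δ k * (1/((k:ℝ)+1)) := by
    intro k
    rw [← Metric.infDist_lt_iff hXne]
    have : 0 < δ k * (1/((k:ℝ)+1)) := mul_pos (hδpos k) (by positivity)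
    linarith
  choose z hzX hzd using key
  have hgtend : Tendsto g atTop (𝓝 0) := by
    have : Tendsto (fun k => (g k / δ k) * δ k) atTop (𝓝 0) := by
      simpa using hgd.mul hδ0
    refine this.congr fun k => div_mul_cancel₀ _ (hδpos k).ne'
  have hzb : ∀ k, ‖z k - q k‖ < g k + δ k * (1/((k:ℝ)+1)) := by
    intro k; rw [← dist_eq_norm, dist_comm]; exact hzd k
  refine ⟨z, δ, hzX, ?_, hδpos, hδ0, ?_⟩
  · rw [tendsto_iff_norm_sub_tendsto_zero]
    have hb : ∀ k : ℕ, ‖z k - x‖ ≤ (g k + δ k * (1/((k:ℝ)+1))) + (‖xk k - x‖ + δ k * ‖v‖) := by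
      intro k
      calc ‖z k - x‖ ≤ ‖z k - q k‖ + ‖q k - x‖ := norm_sub_le_norm_sub_add_norm_sub _ _ _
        _ ≤ (g k + δ k * (1/((k:ℝ)+1))) + (‖xk k - x‖ + δ k * ‖v‖) := by
            have h1 : ‖q k - x‖ ≤ ‖xk k - x‖ + δ k * ‖v‖ := by
              have : q k - x = (xk k - x) + δ k • v := by simp only [hqdef]; abel
              rw [this]
              refine le_trans (norm_add_le _ _) ?_
              rw [norm_smul, Real.norm_eq_abs, abs_of_pos (hδpos k)]
            linarith [(hzb k).le]
    refine squeeze_zero (fun k => norm_nonneg _) hb ?_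
    have l1 : Tendsto (fun k : ℕ => g k + δ k * (1/((k:ℝ)+1))) atTop (𝓝 0) := by
      simpa using hgtend.add (hδ0.mul aux_tendsto_one_div_nat)
    have l2 : Tendsto (fun k : ℕ => ‖xk k - x‖ + δ k * ‖v‖) atTop (𝓝 0) := by
      simpa using (tendsto_iff_norm_sub_tendsto_zero.mp hxk).add (hδ0.mul tendsto_const_nhds)
    simpa using l1.add l2
  · have hdecomp : ∀ k, (δ k)⁻¹ • (z k - x) =
        ((δ k)⁻¹ • (z k - q k) + (δ k)⁻¹ • (xk k - x)) + v := by
      intro k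
      have : z k - x = (z k - q k) + (xk k - x) + δ k • v := by simp only [hqdef]; abel
      rw [this, smul_add, smul_add, smul_smul, inv_mul_cancel₀ (hδpos k).ne', one_smul]
    have hEb : ∀ k : ℕ, ‖(δ k)⁻¹ • (z k - q k)‖ ≤ g k / δ k + 1/((k:ℝ)+1) := by
      intro k
      rw [norm_smul, Real.norm_eq_abs, abs_of_pos (inv_pos.mpr (hδpos k))]
      have h2 : (δ k)⁻¹ * ‖z k - q k‖ ≤ (δ k)⁻¹ * (g k + δ k * (1/((k:ℝ)+1))) :=
        mul_le_mul_of_nonneg_left (hzb k).le (inv_pos.mpr (hδpos k)).le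
      refine le_trans h2 (le_of_eq ?_)
      rw [mul_add, inv_mul_cancel_left₀ (hδpos k).ne', inv_mul_eq_div]
    have hE : Tendsto (fun k => (δ k)⁻¹ • (z k - q k)) atTop (𝓝 0) :=
      squeeze_zero_norm hEb (by simpa using hgd.add aux_tendsto_one_div_nat)
    have := (hE.add hlim).add (tendsto_const_nhds (x := v))
    simp only [zero_add] at this
    refine Tendsto.congr (fun k => (hdecomp k).symm) ?_
    convert this using 2
    abel

lemma convex_tanCone {X : Set (Euc n)} (hX : ClarkeRegular X) {x : Euc n} (hx : x ∈ X) :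
    Convex ℝ (tanCone X x) := by
  intro u hu v hv a b ha hb hab
  rcases ha.eq_or_lt with ha0 | ha0
  · rw [← ha0] at hab; rw [← ha0]; simp only [zero_smul, zero_add]
    rw [zero_add] at hab; rw [hab, one_smul]; exact hv
  · rcases hb.eq_or_lt with hb0 | hb0
    · rw [← hb0] at hab; rw [← hb0]; simp only [zero_smul, add_zero]
      rw [add_zero] at hab; rw [hab, one_smul]; exact hu
    · have h1 : a • u ∈ tanCone X x := smul_mem_tanCone ha0 hu
      have h2 : b • v ∈ clarkeCone X x := (hX.2 x hx) ▸ smul_mem_tanCone hb0 hv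
      have := add_mem_tanCone hX.1 hx h2 h1
      rwa [add_comm] at this

section Quad
variable (g : VarMetric n) (x : Euc n)

lemma B_zero_right (u : Euc n) : g.B x u 0 = 0 := (g.B x u).map_zero

lemma B_zero_left (u : Euc n) : g.B x 0 u = 0 := by
  rw [g.symm]; exact B_zero_right g x u

lemma Q_nonneg (u : Euc n) : 0 ≤ g.B x u u := by
  rcases eq_or_ne u 0 with h | h
  · rw [h, B_zero_right]
  · exact (g.posdef x u h).le

lemma Q_eq_zero_iff (u : Euc n) : g.B x u u = 0 ↔ u = 0 := by
  constructor
  · intro h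
    by_contra hne
    exact absurd h (g.posdef x u hne).ne'
  · rintro rfl; rw [B_zero_right]

lemma B_add_left (u v w : Euc n) : g.B x (u + v) w = g.B x u w + g.B x v w := by
  rw [map_add]; rfl

lemma B_add_right (u v w : Euc n) : g.B x u (v + w) = g.B x u v + g.B x u w :=
  (g.B x u).map_add v w

lemma B_smul_left (c : ℝ) (u w : Euc n) : g.B x (c • u) w = c * g.B x u w := by
  rw [ContinuousLinearMap.map_smul]; rfl

lemma B_smul_right (c : ℝ) (u w : Euc n) : g.B x u (c • w) = c * g.B x u w :=
  (g.B x u).map_smul c w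

lemma B_sub_left (u v w : Euc n) : g.B x (u - v) w = g.B x u w - g.B x v w := by
  rw [map_sub]; rfl

lemma B_sub_right (u v w : Euc n) : g.B x u (v - w) = g.B x u v - g.B x u w :=
  (g.B x u).map_sub v w

lemma B_neg_left (u w : Euc n) : g.B x (-u) w = - g.B x u w := by
  rw [map_neg]; rfl

lemma Q_neg (u : Euc n) : g.B x (-u) (-u) = g.B x u u := by
  rw [B_neg_left, (g.B x u).map_neg, neg_neg]

lemma cauchy_schwarz (u w : Euc n) : (g.B x u w)^2 ≤ g.B x u u * g.B x w w := by
  rcases eq_or_ne w 0 with h | h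
  · rw [h, B_zero_right, B_zero_right]; norm_num
  · have hw : 0 < g.B x w w := g.posdef x w h
    set t : ℝ := g.B x u w / g.B x w w with ht
    have h0 : 0 ≤ g.B x (u - t • w) (u - t • w) := Q_nonneg g x _
    rw [B_sub_left, B_sub_right, B_sub_right, B_smul_left, B_smul_right, B_smul_left,
      B_smul_right, g.symm x w u] at h0
    have e : t * g.B x w w = g.B x u w := div_mul_cancel₀ _ hw.ne'
    nlinarith [mul_nonneg h0 hw.le, e]

lemma gnorm_sq (u : Euc n) : (g.gnorm x u)^2 = g.B x u u :=
  Real.sq_sqrt (Q_nonneg g x u)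

lemma gnorm_nonneg (u : Euc n) : 0 ≤ g.gnorm x u := Real.sqrt_nonneg _

lemma gnorm_le_gnorm_iff (u w : Euc n) : g.gnorm x u ≤ g.gnorm x w ↔ g.B x u u ≤ g.B x w w := by
  unfold VarMetric.gnorm
  exact Real.sqrt_le_sqrt_iff (Q_nonneg g x w)

lemma abs_B_le (u w : Euc n) : |g.B x u w| ≤ g.gnorm x u * g.gnorm x w := by
  have h := cauchy_schwarz g x u w
  have h2 : (g.gnorm x u * g.gnorm x w)^2 = g.B x u u * g.B x w w := by
    rw [mul_pow, gnorm_sq, gnorm_sq]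
  have h3 : |g.B x u w|^2 ≤ (g.gnorm x u * g.gnorm x w)^2 := by rw [h2, sq_abs]; exact h
  nlinarith [h3, abs_nonneg (g.B x u w), mul_nonneg (gnorm_nonneg g x u) (gnorm_nonneg g x w)]

lemma coercive : ∃ c > (0:ℝ), ∀ u : Euc n, c * ‖u‖^2 ≤ g.B x u u := by
  rcases subsingleton_or_nontrivial (Euc n) with hs | hnt
  · refine ⟨1, one_pos, fun u => ?_⟩
    have : u = 0 := Subsingleton.elim u 0
    rw [this, B_zero_right]; simp
  · have hsph : IsCompact (Metric.sphere (0 : Euc n) 1) := isCompact_sphere 0 1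
    have hne : (Metric.sphere (0 : Euc n) 1).Nonempty := by
      obtain ⟨u, hu⟩ := exists_norm_eq (Euc n) (zero_le_one)
      exact ⟨u, by simpa [mem_sphere_iff_norm] using hu⟩
    have hcont : Continuous (fun u : Euc n => g.B x u u) :=
      Continuous.clm_apply ((g.B x).continuous) continuous_id
    obtain ⟨u₀, hu₀mem, hu₀min⟩ := hsph.exists_isMinOn hne hcont.continuousOn
    have hu₀norm : ‖u₀‖ = 1 := by simpa [mem_sphere_iff_norm] using hu₀mem
    have hu₀ne : u₀ ≠ 0 := by intro h; rw [h, norm_zero] at hu₀norm; norm_num at hu₀norm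
    set c : ℝ := g.B x u₀ u₀ with hc
    refine ⟨c, g.posdef x u₀ hu₀ne, fun u => ?_⟩
    rcases eq_or_ne u 0 with h | h
    · rw [h, B_zero_right]; simp
    · have hn : ‖u‖ ≠ 0 := norm_ne_zero_iff.mpr h
      set s : ℝ := ‖u‖ with hs
      set uu : Euc n := s⁻¹ • u with huu
      have huunorm : ‖uu‖ = 1 := by
        rw [huu, norm_smul, Real.norm_eq_abs, abs_inv, abs_of_nonneg (norm_nonneg u)]
        field_simp
      have hrep : u = s • uu := by rw [huu, smul_inv_smul₀ hn]
      have hmin : c ≤ g.B x uu uu := hu₀min (by simpa [mem_sphere_iff_norm] using huunorm)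
      have hexpand : g.B x u u = s^2 * g.B x uu uu := by
        rw [hrep, B_smul_left, B_smul_right]; ring
      rw [hexpand]
      have hs0 : 0 < s := by positivity
      nlinarith [hmin, hs0]
end Quad

section Proj
variable {X : Set (Euc n)} {x : Euc n} (g : VarMetric n) (f : Euc n → Euc n)

lemma cone_add_smul (hconv : Convex ℝ (tanCone X x))
    (hsmul : ∀ {c : ℝ}, 0 < c → ∀ {v : Euc n}, v ∈ tanCone X x → c • v ∈ tanCone X x)
    {v u : Euc n} (hv : v ∈ tanCone X x) (hu : u ∈ tanCone X x) {t : ℝ} (ht : 0 < t) :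
    v + t • u ∈ tanCone X x := by
  have h1t : (0:ℝ) < 1 + t := by linarith
  have hcomb : (1/(1+t)) • v + (t/(1+t)) • u ∈ tanCone X x := by
    refine hconv hv hu (by positivity) (by positivity) ?_
    field_simp
  have := hsmul h1t hcomb
  convert this using 1
  rw [smul_add, smul_smul, smul_smul]
  congr 1
  · rw [mul_one_div, div_self h1t.ne', one_smul]
  · rw [mul_div_assoc']
    rw [mul_comm, mul_div_assoc, div_self h1t.ne', mul_one]

lemma proj_exists (hclosed : IsClosed (tanCone X x)) (h0 : (0:Euc n) ∈ tanCone X x) :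
    ∃ v, v ∈ projVF X g f x := by
  obtain ⟨c, hc0, hc⟩ := coercive g x
  set F : Euc n → ℝ := fun v => g.B x (v - f x) (v - f x) with hF
  have hFcont : Continuous F :=
    ((Continuous.clm_apply ((g.B x).continuous) continuous_id).comp
      (continuous_id.sub continuous_const))
  set R : ℝ := ‖f x‖ + Real.sqrt (F 0 / c) + 1 with hR
  have hbound : ∀ w : Euc n, F w ≤ F 0 → ‖w‖ ≤ R - 1 := by
    intro w hw
    have h1 : c * ‖w - f x‖^2 ≤ F 0 := le_trans (hc (w - f x)) hw
    have h2 : ‖w - f x‖^2 ≤ F 0 / c := by rwa [le_div_iff₀ hc0, mul_comm]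
    have h3 : ‖w - f x‖ ≤ Real.sqrt (F 0 / c) := by
      rw [← Real.sqrt_sq (norm_nonneg (w - f x))]
      exact Real.sqrt_le_sqrt h2
    have h4 : ‖w‖ ≤ ‖w - f x‖ + ‖f x‖ := by
      have := norm_add_le (w - f x) (f x)
      simpa using this
    rw [hR]; linarith
  set K : Set (Euc n) := tanCone X x ∩ Metric.closedBall 0 R with hK
  have hKcomp : IsCompact K := (isCompact_closedBall 0 R).inter_left hclosed
  have hR0 : 0 ≤ R := by
    rw [hR]; positivity
  have hKne : K.Nonempty := ⟨0, h0, Metric.mem_closedBall_self hR0⟩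
  obtain ⟨v, hvK, hvmin⟩ := hKcomp.exists_isMinOn hKne hFcont.continuousOn
  refine ⟨v, hvK.1, fun w hw => ?_⟩
  rw [gnorm_le_gnorm_iff]
  by_cases hwR : ‖w‖ ≤ R
  · exact hvmin ⟨hw, by rwa [Metric.mem_closedBall, dist_zero_right]⟩
  · push_neg at hwR
    have h1 : F v ≤ F 0 := hvmin ⟨h0, Metric.mem_closedBall_self hR0⟩
    by_contra hcon
    push_neg at hcon
    have : F w ≤ F 0 := by
      show F w ≤ F 0
      calc F w ≤ F v := le_of_lt hcon
        _ ≤ F 0 := h1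
    have := hbound w this
    linarith

lemma proj_unique (hconv : Convex ℝ (tanCone X x))
    {v w : Euc n} (hv : v ∈ projVF X g f x) (hw : w ∈ projVF X g f x) : v = w := by
  set F : Euc n → ℝ := fun u => g.B x (u - f x) (u - f x) with hF
  have hFvw : F v = F w := by
    have h1 : F v ≤ F w := (gnorm_le_gnorm_iff g x _ _).mp (hv.2 w hw.1)
    have h2 : F w ≤ F v := (gnorm_le_gnorm_iff g x _ _).mp (hw.2 v hv.1)
    linarith
  set m : Euc n := (1/2:ℝ) • v + (1/2:ℝ) • w with hm
  have hmS : m ∈ tanCone X x :=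
    hconv hv.1 hw.1 (by norm_num) (by norm_num) (by norm_num)
  have hvm : F v ≤ F m := (gnorm_le_gnorm_iff g x _ _).mp (hv.2 m hmS)
  have hmid : m - f x = (1/2:ℝ) • (v - f x) + (1/2:ℝ) • (w - f x) := by
    rw [hm]; module
  have hFm : F m = (1/4)*F v + (1/2)*(g.B x (v - f x) (w - f x)) + (1/4)*F w := by
    show g.B x (m - f x) (m - f x) = _
    rw [hmid]
    simp only [B_add_left, B_add_right, B_smul_left, B_smul_right]
    rw [g.symm x (w - f x) (v - f x)]
    show _ = (1/4:ℝ) * g.B x (v - f x) (v - f x) + (1/2:ℝ) * g.B x (v - f x) (w - f x)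
      + (1/4:ℝ) * g.B x (w - f x) (w - f x)
    ring
  have hQvw : g.B x (v - w) (v - w) = F v - 2*(g.B x (v - f x) (w - f x)) + F w := by
    have hid : v - w = (v - f x) - (w - f x) := by abel
    rw [hid]
    simp only [hF, B_sub_left, B_sub_right]
    rw [g.symm x w v, g.symm x (f x) v, g.symm x (f x) w]
    ring
  have hQ0 : g.B x (v - w) (v - w) ≤ 0 := by
    rw [hQvw]
    rw [hFm] at hvm
    linarith [hFvw]
  have := le_antisymm hQ0 (Q_nonneg g x (v - w))
  have hvw0 : v - w = 0 := (Q_eq_zero_iff g x (v - w)).mp this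
  exact sub_eq_zero.mp hvw0

lemma proj_opt (hconv : Convex ℝ (tanCone X x))
    (hsmul : ∀ {c : ℝ}, 0 < c → ∀ {v : Euc n}, v ∈ tanCone X x → c • v ∈ tanCone X x)
    {v : Euc n} (hv : v ∈ projVF X g f x) :
    ∀ u ∈ tanCone X x, g.B x u (f x - v) ≤ 0 := by
  intro u hu
  set a : ℝ := g.B x (v - f x) u with ha
  set b : ℝ := g.B x u u with hb
  have hkey : ∀ t : ℝ, 0 < t → 0 ≤ 2*t*a + t^2*b := by
    intro t ht
    have hmem : v + t • u ∈ tanCone X x := cone_add_smul hconv hsmul hv.1 hu ht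
    have h1 : g.B x (v - f x) (v - f x) ≤ g.B x (v + t • u - f x) (v + t • u - f x) :=
      (gnorm_le_gnorm_iff g x _ _).mp (hv.2 _ hmem)
    have hid : v + t • u - f x = (v - f x) + t • u := by abel
    rw [hid] at h1
    simp only [B_add_left, B_add_right, B_smul_left, B_smul_right] at h1
    rw [g.symm x u (v - f x)] at h1
    rw [ha, hb]
    nlinarith [h1]
  have ha0 : 0 ≤ a := by
    by_contra hcon
    push_neg at hcon
    have hb0 : 0 ≤ b := Q_nonneg g x u
    have ht : 0 < -a/(b+1) := div_pos (by linarith) (by linarith)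
    have := hkey _ ht
    have hh : (-a/(b+1)) * (b+1) = -a := div_mul_cancel₀ _ (by linarith : (b+1) ≠ 0)
    nlinarith [this, hh]
  have : g.B x u (f x - v) = -a := by
    rw [g.symm x u (f x - v), ha]
    simp only [B_sub_left]
    ring
  rw [this]; linarith
end Proj


lemma gnorm_neg (g : VarMetric n) (x u : Euc n) : g.gnorm x (-u) = g.gnorm x u := by
  unfold VarMetric.gnorm
  rw [Q_neg]

lemma proj_mem_normalCone {X : Set (Euc n)} (hX : ClarkeRegular X) (g : VarMetric n)
    (f : Euc n → Euc n) {x : Euc n} (hx : x ∈ X) {v : Euc n} (hv : v ∈ projVF X g f x) :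
    (f x - v) ∈ normalCone X g x := by
  intro u hu
  rw [← hX.2 x hx] at hu
  exact proj_opt g f (convex_tanCone hX hx)
    (fun {c} hc {w} hw => smul_mem_tanCone hc hw) hv u hu

set_option maxHeartbeats 4000000 in
/-- single-valuedness and one-sided Lipschitz property of the
projected vector field on prox-regular sets (Proposition 7.11). -/
theorem stmt_15 {n : ℕ} (X : Set (Euc n)) (g : VarMetric n) (f : Euc n → Euc n)
    (hX : ClarkeRegular X) (hprox : ProxReg X g) (hg : LocLipMetric X g)
    (hf : ∀ x ∈ X, ∃ K : NNReal, ∃ U ∈ 𝓝 x, LipschitzOnWith K f (X ∩ U)) :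
    (∀ x ∈ X, ∃ v : Euc n, projVF X g f x = {v}) ∧
    ∀ x ∈ X, ∃ L > (0:ℝ), ∃ U ∈ 𝓝 x, ∀ y ∈ X ∩ U,
      ∀ vx ∈ projVF X g f x, ∀ vy ∈ projVF X g f y,
        g.B x (vy - vx) (y - x) ≤ L * (g.gnorm x (y - x)) ^ 2    := by
  constructor
  · -- single-valuedness
    intro x hx
    obtain ⟨v, hv⟩ := proj_exists g f (isClosed_tanCone X x) (zero_mem_tanCone hx)
    exact ⟨v, Set.eq_singleton_iff_unique_mem.mpr
      ⟨hv, fun w hw => proj_unique g f (convex_tanCone hX hx) hw hv⟩⟩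
  · -- one-sided Lipschitz estimate
    intro x hx
    obtain ⟨L₁, hL₁, W, hW, hproxx⟩ := hprox x hx
    obtain ⟨K, Ug, hUg, hKg⟩ := hg x hx
    obtain ⟨Kf, Uf, hUf, hKf⟩ := hf x hx
    obtain ⟨c, hc0, hcoer⟩ := coercive g x
    have hWUU : W ∩ Ug ∩ Uf ∈ 𝓝 x := inter_mem (inter_mem hW hUg) hUf
    obtain ⟨ρ₀, hρ₀, hball⟩ := Metric.mem_nhds_iff.mp hWUU
    have hK0 : (0:ℝ) ≤ (K:ℝ) := K.coe_nonneg
    have hKf0 : (0:ℝ) ≤ (Kf:ℝ) := Kf.coe_nonneg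
    obtain ⟨ρ, hρdef⟩ : ∃ t : ℝ, t = min (ρ₀/2) (c/(2*(K:ℝ)+1)) := ⟨_, rfl⟩
    have hρpos : 0 < ρ := hρdef ▸ lt_min (by linarith) (by positivity)
    have hρρ₀ : ρ < ρ₀ := hρdef ▸ lt_of_le_of_lt (min_le_left _ _) (by linarith)
    have hρK : (K:ℝ) * ρ ≤ c/2 := by
      have h1 : ρ ≤ c/(2*(K:ℝ)+1) := hρdef ▸ min_le_right _ _
      have hd : (0:ℝ) < 2*(K:ℝ)+1 := by linarith
      rw [le_div_iff₀ hd] at h1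
      nlinarith [hρpos.le]
    have hsub : Metric.ball x ρ ⊆ W ∩ Ug ∩ Uf :=
      subset_trans (Metric.ball_subset_ball hρρ₀.le) hball
    have hxW : x ∈ W := mem_of_mem_nhds hW
    have hxUg : x ∈ Ug := mem_of_mem_nhds hUg
    have hxUf : x ∈ Uf := mem_of_mem_nhds hUf
    obtain ⟨M, hM⟩ : ∃ t : ℝ, t = ‖g.B x‖ := ⟨_, rfl⟩
    have hM0 : 0 ≤ M := by rw [hM]; exact norm_nonneg (g.B x)
    obtain ⟨M', hM'⟩ : ∃ t : ℝ, t = M + (K:ℝ)*ρ := ⟨_, rfl⟩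
    have hM'0 : 0 ≤ M' := by rw [hM']; positivity
    obtain ⟨Fb, hFb⟩ : ∃ t : ℝ, t = ‖f x‖ + (Kf:ℝ)*ρ := ⟨_, rfl⟩
    have hFb0 : 0 ≤ Fb := by rw [hFb]; positivity
    obtain ⟨Gb, hGb⟩ : ∃ t : ℝ, t = Real.sqrt (M' * Fb^2) := ⟨_, rfl⟩
    have hGb0 : 0 ≤ Gb := hGb ▸ Real.sqrt_nonneg _
    obtain ⟨Eb, hEb⟩ : ∃ t : ℝ, t = Real.sqrt (2*M'*Fb^2/c) := ⟨_, rfl⟩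
    have hEb0 : 0 ≤ Eb := hEb ▸ Real.sqrt_nonneg _
    obtain ⟨Cst, hCst⟩ : ∃ t : ℝ, t = M*(Kf:ℝ) + L₁*Gb*M + L₁*Gb*M' + (K:ℝ)*Eb := ⟨_, rfl⟩
    have hCst0 : 0 ≤ Cst := by
      rw [hCst]
      have h1 : 0 ≤ L₁*Gb*M := by positivity
      have h2 : 0 ≤ L₁*Gb*M' := by positivity
      have h3 : 0 ≤ M*(Kf:ℝ) := mul_nonneg hM0 hKf0
      have h4 : 0 ≤ (K:ℝ)*Eb := mul_nonneg hK0 hEb0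
      linarith
    refine ⟨Cst/c + 1, by have := div_nonneg hCst0 hc0.le; linarith,
      Metric.ball x ρ, Metric.ball_mem_nhds x hρpos, ?_⟩
    rintro y ⟨hyX, hyU⟩ vx hvx vy hvy
    have hyW : y ∈ W := (hsub hyU).1.1
    have hyUg : y ∈ Ug := (hsub hyU).1.2
    have hyUf : y ∈ Uf := (hsub hyU).2
    have hdyx : ‖y - x‖ < ρ := by
      rw [← dist_eq_norm]; exact Metric.mem_ball.mp hyU
    have hdyx0 : 0 ≤ ‖y - x‖ := norm_nonneg _
    -- Lipschitz bound on the metric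
    have hBdiff : ‖g.B x - g.B y‖ ≤ (K:ℝ) * ‖y - x‖ := by
      have h0 := hKg.dist_le_mul x ⟨hx, hxUg⟩ y ⟨hyX, hyUg⟩
      calc ‖g.B x - g.B y‖ = dist (g.B x) (g.B y) := (dist_eq_norm (g.B x) (g.B y)).symm
        _ ≤ (K:ℝ) * dist x y := h0
        _ = (K:ℝ) * ‖y - x‖ := by rw [dist_eq_norm, norm_sub_rev]
    have hBd : ∀ u w : Euc n, |g.B x u w - g.B y u w| ≤ (K:ℝ)*‖y-x‖*‖u‖*‖w‖ := by
      intro u w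
      have h1 : g.B x u w - g.B y u w = ((g.B x - g.B y) u) w := by
        simp [ContinuousLinearMap.sub_apply]
      rw [h1, ← Real.norm_eq_abs]
      refine le_trans (ContinuousLinearMap.le_opNorm₂ _ u w) ?_
      have := mul_le_mul_of_nonneg_right hBdiff (norm_nonneg u)
      have := mul_le_mul_of_nonneg_right this (norm_nonneg w)
      linarith
    -- operator bound for B at y
    have hBy_op : ∀ u w : Euc n, |g.B y u w| ≤ M'*‖u‖*‖w‖ := by
      intro u w
      have h1 : |g.B x u w| ≤ M*‖u‖*‖w‖ := by
        rw [hM, ← Real.norm_eq_abs]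
        exact ContinuousLinearMap.le_opNorm₂ _ u w
      have h2 := hBd u w
      have h3 : (K:ℝ)*‖y-x‖*‖u‖*‖w‖ ≤ (K:ℝ)*ρ*‖u‖*‖w‖ := by
        have := mul_le_mul_of_nonneg_left hdyx.le hK0
        nlinarith [norm_nonneg u, norm_nonneg w, mul_nonneg (norm_nonneg u) (norm_nonneg w)]
      have := abs_sub_abs_le_abs_sub (g.B y u w) (g.B x u w)
      rw [abs_sub_comm] at this
      rw [hM']
      nlinarith [abs_nonneg (g.B y u w)]
    -- uniform coercivity at y
    have hcoery : ∀ u : Euc n, (c/2)*‖u‖^2 ≤ g.B y u u := by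
      intro u
      have h1 := hcoer u
      have h2 := hBd u u
      have h3 : (K:ℝ)*‖y-x‖ ≤ c/2 := by
        have := mul_le_mul_of_nonneg_left hdyx.le hK0
        linarith
      have h4 : (K:ℝ)*‖y-x‖*‖u‖*‖u‖ ≤ (c/2)*‖u‖^2 := by
        nlinarith [mul_nonneg (norm_nonneg u) (norm_nonneg u), sq_nonneg ‖u‖]
      have h5 : g.B x u u - g.B y u u ≤ (c/2)*‖u‖^2 :=
        le_trans (le_trans (le_abs_self _) h2) h4
      linarith
    -- bound on f y
    have hfy : ‖f y‖ ≤ Fb := by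
      have := hKf.dist_le_mul y ⟨hyX, hyUf⟩ x ⟨hx, hxUf⟩
      rw [dist_eq_norm, dist_eq_norm] at this
      have h2 : ‖f y‖ ≤ ‖f y - f x‖ + ‖f x‖ := by
        simpa using norm_add_le (f y - f x) (f x)
      have h3 : (Kf:ℝ) * ‖y - x‖ ≤ (Kf:ℝ) * ρ :=
        mul_le_mul_of_nonneg_left hdyx.le hKf0
      rw [hFb]
      linarith
    have hfx : ‖f x‖ ≤ Fb := by
      rw [hFb]; nlinarith
    -- the normals
    obtain ⟨ηx, hηx⟩ : ∃ t : Euc n, t = f x - vx := ⟨_, rfl⟩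
    obtain ⟨ηy, hηy⟩ : ∃ t : Euc n, t = f y - vy := ⟨_, rfl⟩
    have hNx : ηx ∈ normalCone X g x := hηx ▸ proj_mem_normalCone hX g f hx hvx
    have hNy : ηy ∈ normalCone X g y := hηy ▸ proj_mem_normalCone hX g f hyX hvy
    -- g-norm bounds on the normals
    have hgy_eta_sq : g.B y ηy ηy ≤ M' * Fb^2 := by
      have h1 : g.gnorm y (vy - f y) ≤ g.gnorm y (0 - f y) :=
        hvy.2 0 (zero_mem_tanCone hyX)
      have h2 : g.gnorm y ηy ≤ g.gnorm y (f y) := by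
        have e1 : ηy = -(vy - f y) := by rw [hηy]; abel
        have e2 : (0:Euc n) - f y = -(f y) := by abel
        rw [e1, gnorm_neg]
        rw [e2, gnorm_neg] at h1
        exact h1
      have h3 : g.B y ηy ηy ≤ g.B y (f y) (f y) := by
        have := (gnorm_le_gnorm_iff g y ηy (f y)).mp h2
        exact this
      have h4 : g.B y (f y) (f y) ≤ M' * Fb^2 := by
        have := hBy_op (f y) (f y)
        have h5 : M'*‖f y‖*‖f y‖ ≤ M'*Fb^2 := by
          have hsq : ‖f y‖*‖f y‖ ≤ Fb*Fb := mul_le_mul hfy hfy (norm_nonneg _) hFb0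
          have h7 := mul_le_mul_of_nonneg_left hsq hM'0
          nlinarith [h7]
        have h8 := le_trans (le_abs_self (g.B y (f y) (f y))) this
        linarith
      linarith
    have hgx_eta_sq : g.B x ηx ηx ≤ M' * Fb^2 := by
      have h1 : g.gnorm x (vx - f x) ≤ g.gnorm x (0 - f x) :=
        hvx.2 0 (zero_mem_tanCone hx)
      have h2 : g.gnorm x ηx ≤ g.gnorm x (f x) := by
        have e1 : ηx = -(vx - f x) := by rw [hηx]; abel
        have e2 : (0:Euc n) - f x = -(f x) := by abel
        rw [e1, gnorm_neg]
        rw [e2, gnorm_neg] at h1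
        exact h1
      have h3 : g.B x ηx ηx ≤ g.B x (f x) (f x) :=
        (gnorm_le_gnorm_iff g x ηx (f x)).mp h2
      have h4 : g.B x (f x) (f x) ≤ M' * Fb^2 := by
        have h5 : |g.B x (f x) (f x)| ≤ M*‖f x‖*‖f x‖ := by
          rw [hM, ← Real.norm_eq_abs]
          exact ContinuousLinearMap.le_opNorm₂ _ _ _
        have h6 : M*‖f x‖*‖f x‖ ≤ M'*Fb^2 := by
          have hMM' : M ≤ M' := by rw [hM']; nlinarith [mul_nonneg hK0 hρpos.le]
          have hsq : ‖f x‖*‖f x‖ ≤ Fb*Fb := mul_le_mul hfx hfx (norm_nonneg _) hFb0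
          have h7 := mul_le_mul_of_nonneg_left hsq hM0
          have h8 := mul_le_mul_of_nonneg_right hMM' (mul_nonneg hFb0 hFb0)
          nlinarith [h7, h8]
        have h9 := le_trans (le_abs_self (g.B x (f x) (f x))) h5
        linarith
      linarith
    have hgnx : g.gnorm x ηx ≤ Gb := by
      rw [hGb]
      exact Real.sqrt_le_sqrt hgx_eta_sq
    have hgny : g.gnorm y ηy ≤ Gb := by
      rw [hGb]
      exact Real.sqrt_le_sqrt hgy_eta_sq
    -- Euclidean bound on ηy
    have hey : ‖ηy‖ ≤ Eb := by
      have h1 := hcoery ηy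
      have h2 : ‖ηy‖^2 ≤ 2*M'*Fb^2/c := by
        rw [le_div_iff₀ hc0]
        nlinarith [hgy_eta_sq]
      calc ‖ηy‖ = Real.sqrt (‖ηy‖^2) := (Real.sqrt_sq (norm_nonneg _)).symm
        _ ≤ Eb := by rw [hEb]; exact Real.sqrt_le_sqrt h2
    -- prox-regularity applications
    have hT2 := hproxx x ⟨hx, hxW⟩ y ⟨hyX, hyW⟩ ηx hNx
    have hT3 := hproxx y ⟨hyX, hyW⟩ x ⟨hx, hxW⟩ ηy hNy
    -- quadratic bounds on gnorm of displacements
    have hqx : (g.gnorm x (y - x))^2 ≤ M * ‖y-x‖^2 := by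
      rw [gnorm_sq]
      have h5 : |g.B x (y-x) (y-x)| ≤ M*‖y-x‖*‖y-x‖ := by
        rw [hM, ← Real.norm_eq_abs]
        exact ContinuousLinearMap.le_opNorm₂ _ _ _
      nlinarith [le_abs_self (g.B x (y-x) (y-x))]
    have hqy : (g.gnorm y (x - y))^2 ≤ M' * ‖y-x‖^2 := by
      rw [gnorm_sq]
      have h5 := hBy_op (x-y) (x-y)
      have h6 : ‖x - y‖ = ‖y - x‖ := norm_sub_rev _ _
      rw [h6] at h5
      nlinarith [le_abs_self (g.B y (x-y) (x-y))]
    -- term estimates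
    have hT2' : g.B x ηx (y - x) ≤ L₁ * Gb * (M * ‖y-x‖^2) := by
      have hq0 : 0 ≤ (g.gnorm x (y-x))^2 := sq_nonneg _
      have s1 : L₁ * g.gnorm x ηx ≤ L₁ * Gb := mul_le_mul_of_nonneg_left hgnx hL₁.le
      have s2 : L₁ * g.gnorm x ηx * (g.gnorm x (y-x))^2 ≤ L₁ * Gb * (g.gnorm x (y-x))^2 :=
        mul_le_mul_of_nonneg_right s1 hq0
      have s3 : L₁ * Gb * (g.gnorm x (y-x))^2 ≤ L₁ * Gb * (M * ‖y-x‖^2) :=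
        mul_le_mul_of_nonneg_left hqx (mul_nonneg hL₁.le hGb0)
      linarith [hT2]
    have hT3' : g.B y ηy (x - y) ≤ L₁ * Gb * (M' * ‖y-x‖^2) := by
      have hq0 : 0 ≤ (g.gnorm y (x-y))^2 := sq_nonneg _
      have s1 : L₁ * g.gnorm y ηy ≤ L₁ * Gb := mul_le_mul_of_nonneg_left hgny hL₁.le
      have s2 : L₁ * g.gnorm y ηy * (g.gnorm y (x-y))^2 ≤ L₁ * Gb * (g.gnorm y (x-y))^2 :=
        mul_le_mul_of_nonneg_right s1 hq0
      have s3 : L₁ * Gb * (g.gnorm y (x-y))^2 ≤ L₁ * Gb * (M' * ‖y-x‖^2) :=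
        mul_le_mul_of_nonneg_left hqy (mul_nonneg hL₁.le hGb0)
      linarith [hT3]
    have hT3'' : g.B x ηy (x - y) ≤ L₁ * Gb * (M' * ‖y-x‖^2) + (K:ℝ)*Eb*‖y-x‖^2 := by
      have h1 := hBd ηy (x - y)
      have h6 : ‖x - y‖ = ‖y - x‖ := norm_sub_rev _ _
      rw [h6] at h1
      have h2 : g.B x ηy (x-y) - g.B y ηy (x-y) ≤ (K:ℝ)*‖y-x‖*‖ηy‖*‖y-x‖ :=
        le_trans (le_abs_self _) h1
      have h3 : (K:ℝ)*‖y-x‖*‖ηy‖*‖y-x‖ ≤ (K:ℝ)*Eb*‖y-x‖^2 := by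
        have p1 : (K:ℝ)*‖y-x‖*‖ηy‖ ≤ (K:ℝ)*‖y-x‖*Eb :=
          mul_le_mul_of_nonneg_left hey (mul_nonneg hK0 hdyx0)
        have p2 : (K:ℝ)*‖y-x‖*‖ηy‖*‖y-x‖ ≤ (K:ℝ)*‖y-x‖*Eb*‖y-x‖ :=
          mul_le_mul_of_nonneg_right p1 hdyx0
        have p3 : (K:ℝ)*‖y-x‖*Eb*‖y-x‖ = (K:ℝ)*Eb*‖y-x‖^2 := by ring
        linarith
      linarith [hT3']
    have hT1 : g.B x (f y - f x) (y - x) ≤ M*(Kf:ℝ)*‖y-x‖^2 := by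
      have h5 : |g.B x (f y - f x) (y-x)| ≤ M*‖f y - f x‖*‖y-x‖ := by
        rw [hM, ← Real.norm_eq_abs]
        exact ContinuousLinearMap.le_opNorm₂ _ _ _
      have hlip := hKf.dist_le_mul y ⟨hyX, hyUf⟩ x ⟨hx, hxUf⟩
      rw [dist_eq_norm, dist_eq_norm] at hlip
      have h6 : M*‖f y - f x‖*‖y-x‖ ≤ M*(Kf:ℝ)*‖y-x‖^2 := by
        have p1 : ‖f y - f x‖ ≤ (Kf:ℝ)*‖y-x‖ := hlip
        have p2 : M*‖f y - f x‖ ≤ M*((Kf:ℝ)*‖y-x‖) := mul_le_mul_of_nonneg_left p1 hM0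
        have p3 : M*‖f y - f x‖*‖y-x‖ ≤ M*((Kf:ℝ)*‖y-x‖)*‖y-x‖ :=
          mul_le_mul_of_nonneg_right p2 hdyx0
        have p4 : M*((Kf:ℝ)*‖y-x‖)*‖y-x‖ = M*(Kf:ℝ)*‖y-x‖^2 := by ring
        linarith
      linarith [le_abs_self (g.B x (f y - f x) (y-x))]
    -- decomposition
    have hdec : g.B x (vy - vx) (y - x) =
        g.B x (f y - f x) (y - x) + g.B x ηx (y - x) + g.B x ηy (x - y) := by
      rw [hηx, hηy]
      simp only [B_sub_left, B_sub_right]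
      ring
    -- put it together
    have hmain : g.B x (vy - vx) (y - x) ≤ Cst * ‖y-x‖^2 := by
      rw [hdec, hCst]
      have hid : M*(Kf:ℝ)*‖y-x‖^2 + L₁*Gb*(M*‖y-x‖^2) + (L₁*Gb*(M'*‖y-x‖^2) + (K:ℝ)*Eb*‖y-x‖^2)
          = (M*(Kf:ℝ) + L₁*Gb*M + L₁*Gb*M' + (K:ℝ)*Eb)*‖y-x‖^2 := by ring
      linarith [hT1, hT2', hT3'']
    have hfinal : Cst * ‖y-x‖^2 ≤ (Cst/c + 1) * (g.gnorm x (y - x))^2 := by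
      have h1 : c*‖y-x‖^2 ≤ (g.gnorm x (y - x))^2 := by
        rw [gnorm_sq]
        exact hcoer (y - x)
      have h2 : 0 ≤ (g.gnorm x (y - x))^2 := sq_nonneg _
      have hcc : Cst/c*c = Cst := div_mul_cancel₀ _ hc0.ne'
      nlinarith [mul_le_mul_of_nonneg_left h1 (div_nonneg hCst0 hc0.le), h2, hcc]
    linarith
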